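/- Let k ≥ 1 and n : Fin k → ℕ with n i ≥ 1 for all i and with n j ≥ 2 for at least one j. Then for every z in the unit circle 𝕋 = {w ∈ ℂ : |w| = 1}, the set { w ∈ 𝕋 : there exists p : Fin k → ℕ with w^(∏ i, (n i)^(p i)) = z } is dense in 𝕋. -/
import Mathlib

open Real

private lemma circle_exp_pow (m : ℕ) (t : ℝ) :
    Circle.exp t ^ m = Circle.exp (m * t) := by
  induction m with
  | zero => simp
  | succ m ih =>
    rw [pow_succ, ih, ← Circle.exp_add]
    congr 1
    push_cast
    ring

/-- If `n i ≥ 1` for all `i` and `n j ≥ 2` for some `j`, then for every `z` in the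
circle `𝕋`, the set of `w ∈ 𝕋` admitting some `p : Fin k → ℕ` with `w^{n^p} = z`
is dense in `𝕋`. -/
theorem dense_backward_orbit (k : ℕ) (hk : 1 ≤ k)
    (n : Fin k → ℕ) (hn : ∀ i, 1 ≤ n i) (hj : ∃ j, 2 ≤ n j) :
    ∀ z : Circle,
      Dense { w : Circle | ∃ p : Fin k → ℕ, w ^ (∏ i, (n i) ^ (p i)) = z } := by
  obtain ⟨j, hj2⟩ := hj
  intro z
  set θ : ℝ := Complex.arg (z : ℂ) with hθ
  have hz : Circle.exp θ = z := Circle.exp_arg z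
  set T : Set ℝ := {t | ∃ (m : ℕ) (l : ℤ), t = (θ + 2 * π * l) / ((n j : ℝ)) ^ m} with hT
  have hnj : (1 : ℝ) < (n j : ℝ) := by exact_mod_cast hj2
  have hTdense : Dense T := by
    rw [Metric.dense_iff]
    intro x r hr
    obtain ⟨m, hm⟩ := pow_unbounded_of_one_lt (2 * π / r) hnj
    set N : ℝ := ((n j : ℝ)) ^ m with hN
    have hN0 : 0 < N := pow_pos (lt_trans one_pos hnj) m
    have hNr : 2 * π / N < r := by
      rw [div_lt_iff₀ hN0]
      have := (div_lt_iff₀ hr).mp hm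
      nlinarith
    set l : ℤ := ⌊(x * N - θ) / (2 * π)⌋ with hl
    refine ⟨(θ + 2 * π * l) / N, ?_, ⟨m, l, rfl⟩⟩
    have h2π : (0 : ℝ) < 2 * π := by positivity
    have h1 : 2 * π * l ≤ x * N - θ := by
      rw [mul_comm]
      exact (le_div_iff₀ h2π).mp (Int.floor_le _)
    have h2 : x * N - θ < 2 * π * l + 2 * π := by
      have := Int.lt_floor_add_one ((x * N - θ) / (2 * π))
      rw [div_lt_iff₀ h2π] at this
      calc x * N - θ < (l + 1) * (2 * π) := this
        _ = 2 * π * l + 2 * π := by push_cast; ring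
    rw [Metric.mem_ball, Real.dist_eq]
    have heq : (θ + 2 * π * ↑l) / N - x = (θ + 2 * π * ↑l - x * N) / N := by
      field_simp
    rw [heq, abs_div, abs_of_pos hN0, div_lt_iff₀ hN0, abs_lt]
    have h2πrN : 2 * π < r * N := (div_lt_iff₀ hN0).mp hNr
    constructor <;> nlinarith
  have himg : Circle.exp '' T ⊆
      { w : Circle | ∃ p : Fin k → ℕ, w ^ (∏ i, (n i) ^ (p i)) = z } := by
    rintro w ⟨t, ⟨m, l, rfl⟩, rfl⟩
    refine ⟨fun i => if i = j then m else 0, ?_⟩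
    have hprod : (∏ i, (n i) ^ (if i = j then m else 0)) = (n j) ^ m := by
      rw [Finset.prod_eq_single j (fun i _ hij => by simp [hij]) (by simp)]
      simp
    rw [hprod, circle_exp_pow]
    have hNne : ((n j : ℝ)) ^ m ≠ 0 := by positivity
    have : ((n j) ^ m : ℕ) * ((θ + 2 * π * l) / ((n j : ℝ)) ^ m) = θ + 2 * π * l := by
      push_cast
      field_simp
    rw [this, Circle.exp_add, hz]
    have : Circle.exp (2 * π * l) = 1 := by
      rw [mul_comm]
      exact Circle.exp_int_mul_two_pi l
    rw [this, mul_one]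
  have hsurj : DenseRange Circle.exp :=
    Function.Surjective.denseRange (fun w => ⟨Complex.arg (w : ℂ), Circle.exp_arg w⟩)
  exact Dense.mono himg (hsurj.dense_image Circle.exp.continuous hTdense)
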